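/- The maximum diameter of a connected simple graph on N vertices with m edges (N-1 ≤ m ≤ C(N,2)) equals N - ⌊(1 + √(9 + 8m - 8N))/2⌋. -/

import Mathlib

/-!
If `u` and `v` are at distance `k`, walk along a geodesic `u = p₀, …, p_k = v`. Edges only join
vertices whose distances from `u` differ by at most one, so `p_j` is not adjacent to any `p_i` with
`i ≤ j - 2`, and every vertex off the geodesic is non-adjacent to at least `k - 2` of the `p_i`.
Hence at least `C(k,2) + (N-k-1)(k-2)` pairs are non-edges (Ore's bound), which rearranges to
`9 + 8m - 8N < (2(N-k)+1)²`, i.e. `k ≤ N - ⌊(1 + √(9+8m-8N))/2⌋`.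

For the matching example put `t = m - (N-1)` and let `Q` be the index with `C(Q,2) ≤ t < C(Q+1,2)`,
which is exactly `⌊(1 + √(8t+1))/2⌋`. A clique on `Q + 1` vertices with a path of `N - Q - 1`
further vertices attached, whose first path vertex is joined to `t - C(Q,2)` more clique vertices,
has `m` edges and two vertices at distance `N - Q`.
-/

/-- The diameter of a graph: the maximum pairwise shortest-path distance. -/
noncomputable def graphDiam {V : Type*} [Fintype V] (G : SimpleGraph V) : ℕ :=
  Finset.univ.sup fun u => Finset.univ.sup (G.dist u)

open Finset

theorem Nat.choose_two_mul (n : ℕ) : n.choose 2 * 2 = n * (n - 1) := by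
  rw [Nat.choose_two_right, Nat.div_mul_cancel (Nat.even_mul_pred_self n).two_dvd]

theorem Nat.choose_two_le_and_lt_succ_choose_two (t : ℕ) :
    ((1 + Nat.sqrt (8 * t + 1)) / 2).choose 2 ≤ t ∧
      t < ((1 + Nat.sqrt (8 * t + 1)) / 2 + 1).choose 2 := by
  set s := Nat.sqrt (8 * t + 1)
  set Q := (1 + s) / 2
  have hs : s * s ≤ 8 * t + 1 := Nat.sqrt_le _
  have hs' : 8 * t + 1 < (s + 1) * (s + 1) := Nat.lt_succ_sqrt _
  have hQ := Nat.choose_two_mul Q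
  have hQ' := Nat.choose_two_mul (Q + 1)
  rw [Nat.add_sub_cancel] at hQ'
  constructor
  · have : 2 * Q ≤ s + 1 := by omega
    rcases Q with _ | q
    · simp
    · rw [Nat.add_sub_cancel] at hQ
      nlinarith
  · have : s ≤ 2 * Q := by omega
    nlinarith

theorem Nat.sub_two_le_card_filter_range (a k : ℕ) :
    k - 2 ≤ #{i ∈ range (k + 1) | i + 2 ≤ a ∨ a + 2 ≤ i} := by
  have hnear : #{i ∈ range (k + 1) | ¬(i + 2 ≤ a ∨ a + 2 ≤ i)} ≤ 3 :=
    calc _ ≤ #(Icc (a - 1) (a + 1)) := card_le_card fun i hi => by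
          simp only [mem_filter, mem_Icc] at hi ⊢
          omega
      _ ≤ 3 := by simp only [Nat.card_Icc]; omega
  have := card_filter_add_card_filter_not (s := range (k + 1)) (p := fun i => i + 2 ≤ a ∨ a + 2 ≤ i)
  rw [card_range] at this
  omega

theorem le_sub_half_sqrt_of_add_choose_two_le {n m k : ℕ} (hk : k < n)
    (h : m + k.choose 2 + (n - k - 1) * (k - 2) ≤ n.choose 2) :
    k ≤ n - (1 + Nat.sqrt (9 + 8 * m - 8 * n)) / 2 := by
  suffices Nat.sqrt (9 + 8 * m - 8 * n) < 2 * (n - k) + 1 by omega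
  rw [Nat.sqrt_lt]
  suffices 9 + 8 * m < 8 * n + (2 * (n - k) + 1) * (2 * (n - k) + 1) by
    have : 0 < (2 * (n - k) + 1) * (2 * (n - k) + 1) := by positivity
    omega
  obtain ⟨p, rfl⟩ : ∃ p, n = k + p + 1 := ⟨n - k - 1, by omega⟩
  rw [show k + p + 1 - k = p + 1 by omega]
  have hn := Nat.choose_two_mul (k + p + 1)
  have hk2 := Nat.choose_two_mul k
  rw [show k + p + 1 - k - 1 = p by omega, Nat.add_sub_cancel] at *
  rcases Nat.lt_or_ge k 2 with hk | hk
  · rw [Nat.sub_eq_zero_of_le (by omega : k ≤ 2), mul_zero, add_zero] at h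
    interval_cases k <;> nlinarith
  · obtain ⟨j, rfl⟩ : ∃ j, k = j + 2 := ⟨k - 2, by omega⟩
    rw [Nat.add_sub_cancel, show j + 2 - 1 = j + 1 by omega] at *
    nlinarith

namespace SimpleGraph

variable {V : Type*} {G : SimpleGraph V} {u v : V}

theorem Walk.le_add_length_of_adj_le {φ : V → ℕ} (hφ : ∀ x y, G.Adj x y → φ y ≤ φ x + 1)
    (p : G.Walk u v) : φ v ≤ φ u + p.length := by
  induction p with
  | nil => simp
  | cons h _ ih => have := hφ _ _ h; simp only [Walk.length_cons]; omega

theorem Reachable.le_add_dist_of_adj_le {φ : V → ℕ} (hφ : ∀ x y, G.Adj x y → φ y ≤ φ x + 1)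
    (h : G.Reachable u v) : φ v ≤ φ u + G.dist u v := by
  obtain ⟨p, hp⟩ := h.exists_walk_length_eq_dist
  exact hp ▸ p.le_add_length_of_adj_le hφ

theorem Walk.dist_getVert_of_length_eq_dist (p : G.Walk u v) (hp : p.length = G.dist u v)
    {i : ℕ} (hi : i ≤ p.length) : G.dist u (p.getVert i) = i := by
  have hstart : G.dist u (p.getVert i) ≤ i := by simpa [hi] using dist_le (p.take i)
  have hend : G.dist (p.getVert i) v ≤ p.length - i := by simpa using dist_le (p.drop i)
  have := (p.take i).reachable.dist_triangle_left v
  omega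

theorem not_adj_of_dist_add_two_le {x y : V} (h : G.dist u x + 2 ≤ G.dist u y) :
    ¬G.Adj x y := fun hadj => by
  have := hadj.diff_dist_adj (u := u)
  omega

theorem dist_lt_card [Fintype V] (u v : V) : G.dist u v < Fintype.card V := by
  by_cases h : G.Reachable u v
  · obtain ⟨p, hp⟩ := h.exists_walk_length_eq_dist
    exact hp ▸ (p.isPath_of_length_eq_dist hp).length_lt
  · rw [dist_eq_zero_of_not_reachable h]
    exact Fintype.card_pos_iff.2 ⟨u⟩

section Finite

variable [Fintype V] [DecidableEq V] [DecidableRel G.Adj]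

theorem card_edgeFinset_add_card_edgeFinset_compl :
    #G.edgeFinset + #Gᶜ.edgeFinset = (Fintype.card V).choose 2 := by
  rw [← card_union_of_disjoint (disjoint_edgeFinset.2 disjoint_compl_right), ← edgeFinset_sup,
    ← card_edgeFinset_top_eq_card_choose_two]
  congr! 2
  exact sup_compl_eq_top

/-- `(x, i) ↦ s(x, f i)` injects these pairs into the non-edges; a non-edge joining two vertices
`f i`, `f j` is only counted from its end on the higher level. -/
theorem sum_card_filter_le_card_edgeFinset_compl {d : V → ℕ}
    (hd : ∀ x y, d x + 2 ≤ d y → ¬G.Adj x y) {k : ℕ} {f : ℕ → V} (hf : ∀ i ≤ k, d (f i) = i) :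
    ∑ x, #{i ∈ range (k + 1) | i + 2 ≤ d x ∨ (x ∉ (range (k + 1)).image f ∧ d x + 2 ≤ i)}
      ≤ #Gᶜ.edgeFinset := by
  have hcompl : ∀ x y, d x + 2 ≤ d y → Gᶜ.Adj x y := fun x y h =>
    ⟨fun hxy => by rw [hxy] at h; omega, hd x y h⟩
  have hfS : ∀ l < k + 1, f l ∈ (range (k + 1)).image f :=
    fun l hl => mem_image_of_mem f (mem_range.2 hl)
  rw [← card_sigma]
  refine card_le_card_of_injOn (fun q => s(q.1, f q.2)) ?_ ?_
  · rintro ⟨x, i⟩ hxi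
    simp only [coe_sigma, Set.mem_sigma_iff, coe_univ, Set.mem_univ, mem_coe, mem_filter,
      mem_range, true_and] at hxi
    rw [mem_coe, mem_edgeFinset, mem_edgeSet]
    rcases hxi with ⟨hi, hlt | ⟨-, hgt⟩⟩
    · exact (hcompl _ _ (by rwa [hf i (by omega)])).symm
    · exact hcompl _ _ (by rwa [hf i (by omega)])
  · rintro ⟨x, i⟩ hxi ⟨y, j⟩ hyj hxy
    simp only [coe_sigma, Set.mem_sigma_iff, coe_univ, Set.mem_univ, mem_coe, mem_filter,
      mem_range, true_and] at hxi hyj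
    simp only [Sym2.eq_iff] at hxy
    rcases hxy with ⟨rfl, hij⟩ | ⟨rfl, rfl⟩
    · rw [← hf i (by omega), ← hf j (by omega), hij]
    · rw [hf i (by omega)] at hyj
      rw [hf j (by omega)] at hxi
      simp only [hfS i hxi.1, hfS j hyj.1, not_true, false_and, or_false] at hxi hyj
      omega

theorem choose_two_add_mul_le_card_edgeFinset_compl {d : V → ℕ}
    (hd : ∀ x y, d x + 2 ≤ d y → ¬G.Adj x y) {k : ℕ} {f : ℕ → V}
    (hf : ∀ i ≤ k, d (f i) = i) :
    k.choose 2 + (Fintype.card V - k - 1) * (k - 2) ≤ #Gᶜ.edgeFinset := by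
  have hfinj : Set.InjOn f (range (k + 1)) := fun i hi j hj hij => by
    rw [coe_range, Set.mem_Iio] at hi hj
    rw [← hf i (by omega), ← hf j (by omega), hij]
  set S := (range (k + 1)).image f
  have hS : #S = k + 1 := by rw [card_image_of_injOn hfinj, card_range]
  set J : V → Finset ℕ := fun x =>
    {i ∈ range (k + 1) | i + 2 ≤ d x ∨ (x ∉ S ∧ d x + 2 ≤ i)}
  have hon : ∀ j ∈ range (k + 1), j - 1 ≤ #(J (f j)) := fun j hj => by
    rw [mem_range] at hj
    calc j - 1 = #(range (j - 1)) := (card_range _).symm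
      _ ≤ #(J (f j)) := card_le_card fun i hi => by
        simp only [mem_range, mem_filter, J, hf j (by omega)] at hi ⊢
        omega
  have hoff : ∀ x ∈ Sᶜ, k - 2 ≤ #(J x) := fun x hx =>
    (Nat.sub_two_le_card_filter_range (d x) k).trans <| card_le_card fun i hi => by
      simp only [mem_filter, J] at hi ⊢
      exact ⟨hi.1, hi.2.imp_right fun h => ⟨mem_compl.1 hx, h⟩⟩
  calc k.choose 2 + (Fintype.card V - k - 1) * (k - 2)
      = ∑ j ∈ range (k + 1), (j - 1) + ∑ _x ∈ Sᶜ, (k - 2) := by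
        rw [sum_range_succ', sum_const, card_compl, hS, smul_eq_mul]
        simp [Finset.sum_range_id, Nat.choose_two_right, Nat.sub_sub]
    _ ≤ ∑ j ∈ range (k + 1), #(J (f j)) + ∑ x ∈ Sᶜ, #(J x) :=
        add_le_add (sum_le_sum hon) (sum_le_sum hoff)
    _ = ∑ x ∈ S, #(J x) + ∑ x ∈ Sᶜ, #(J x) := by rw [sum_image hfinj]
    _ = ∑ x, #(J x) := sum_add_sum_compl _ _
    _ ≤ #Gᶜ.edgeFinset := sum_card_filter_le_card_edgeFinset_compl hd hf

theorem card_edgeFinset_add_choose_two_add_mul_le (u v : V) :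
    #G.edgeFinset + (G.dist u v).choose 2 + (Fintype.card V - G.dist u v - 1) * (G.dist u v - 2)
      ≤ (Fintype.card V).choose 2 := by
  obtain ⟨f, hf⟩ : ∃ f : ℕ → V, ∀ i ≤ G.dist u v, G.dist u (f i) = i := by
    by_cases h : G.Reachable u v
    · obtain ⟨p, hp⟩ := h.exists_walk_length_eq_dist
      exact ⟨p.getVert, fun i hi => p.dist_getVert_of_length_eq_dist hp (hp ▸ hi)⟩
    · refine ⟨fun _ => u, fun i hi => ?_⟩
      rw [dist_eq_zero_of_not_reachable h] at hi
      simp [Nat.le_zero.1 hi]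
  have := choose_two_add_mul_le_card_edgeFinset_compl (fun _ _ => not_adj_of_dist_add_two_le) hf
  have := card_edgeFinset_add_card_edgeFinset_compl (G := G)
  omega

end Finite

theorem ncard_edgeSet_fromRel_of_lt [LinearOrder V] [Fintype V] {r : V → V → Prop}
    [DecidableRel r] (hr : ∀ x y, r x y → x < y) :
    (fromRel r).edgeSet.ncard = #{p : V × V | r p.1 p.2} := by
  have himage : (fromRel r).edgeSet =
      ↑((univ.filter fun p : V × V => r p.1 p.2).image fun p => s(p.1, p.2)) := by
    ext e
    induction e using Sym2.ind with
    | _ x y =>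
      simp only [mem_edgeSet, fromRel_adj, coe_image, coe_filter, mem_univ, true_and,
        Set.mem_image, Set.mem_ofPred_eq, Prod.exists, Sym2.eq_iff]
      constructor
      · rintro ⟨-, hxy | hyx⟩
        · exact ⟨x, y, hxy, .inl ⟨rfl, rfl⟩⟩
        · exact ⟨y, x, hyx, .inr ⟨rfl, rfl⟩⟩
      · rintro ⟨a, b, hab, ⟨rfl, rfl⟩ | ⟨rfl, rfl⟩⟩
        · exact ⟨(hr _ _ hab).ne, .inl hab⟩
        · exact ⟨(hr _ _ hab).ne', .inr hab⟩
  rw [himage, Set.ncard_coe_finset, card_image_of_injOn]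
  rintro ⟨a, b⟩ hab ⟨a', b'⟩ hab' h
  simp only [coe_filter, mem_univ, true_and, Set.mem_ofPred_eq] at hab hab'
  rcases Sym2.eq_iff.1 h with ⟨rfl, rfl⟩ | ⟨rfl, rfl⟩
  · rfl
  · exact absurd (hr _ _ hab) (hr _ _ hab').not_gt

end SimpleGraph

open SimpleGraph

theorem dist_le_graphDiam {V : Type*} [Fintype V] (G : SimpleGraph V) (u v : V) :
    G.dist u v ≤ graphDiam G :=
  (le_sup (f := G.dist u) (mem_univ v)).trans
    (le_sup (f := fun u => univ.sup (G.dist u)) (mem_univ u))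

theorem exists_dist_eq_graphDiam {V : Type*} [Fintype V] [Nonempty V] (G : SimpleGraph V) :
    ∃ u v, G.dist u v = graphDiam G := by
  obtain ⟨u, -, hu⟩ := exists_mem_eq_sup univ univ_nonempty fun u => univ.sup (G.dist u)
  obtain ⟨v, -, hv⟩ := exists_mem_eq_sup univ univ_nonempty (G.dist u)
  exact ⟨u, v, by rw [graphDiam, hu, hv]⟩

theorem graphDiam_le {V : Type*} [Fintype V] (G : SimpleGraph V) :
    graphDiam G ≤
      Fintype.card V - (1 + Nat.sqrt (9 + 8 * G.edgeSet.ncard - 8 * Fintype.card V)) / 2 := by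
  classical
  cases isEmpty_or_nonempty V
  · simp [graphDiam]
  obtain ⟨u, v, huv⟩ := exists_dist_eq_graphDiam G
  rw [← huv, ← coe_edgeFinset, Set.ncard_coe_finset]
  exact le_sub_half_sqrt_of_add_choose_two_le (dist_lt_card u v)
    (card_edgeFinset_add_choose_two_add_mul_le u v)

/-- Vertices `0, …, c - 1` form a clique, `c - 1, c, …, N - 1` a path, and `c` is also joined to
the `e` clique vertices `c - e - 1, …, c - 2`; each edge is listed from its smaller end. -/
def lollipopGraph (N c e : ℕ) : SimpleGraph (Fin N) :=
  fromRel fun x y =>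
    x.val < y.val ∧ (y.val < c ∨ y.val = x.val + 1 ∨ (y.val = c ∧ c ≤ x.val + e + 1))

theorem card_filter_lollipopGraph_lt {N c e : ℕ} (hec : e + 1 ≤ c) (y : Fin N) :
    #{x : Fin N | x.val < y.val ∧
        (y.val < c ∨ y.val = x.val + 1 ∨ (y.val = c ∧ c ≤ x.val + e + 1))} =
      if y.val < c then y.val else if y.val = c then e + 1 else 1 := by
  split_ifs with hyc hyc'
  · trans #(Iio y)
    · congr 1
      ext x
      simp only [mem_filter, mem_univ, true_and, mem_Iio, Fin.lt_def]
      omega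
    · exact Fin.card_Iio y
  · trans #(Ico (⟨c - e - 1, by omega⟩ : Fin N) y)
    · congr 1
      ext x
      simp only [mem_filter, mem_univ, true_and, mem_Ico, Fin.lt_def, Fin.le_def]
      omega
    · rw [Fin.card_Ico]
      simp only
      omega
  · trans #{(⟨y.val - 1, by omega⟩ : Fin N)}
    · congr 1
      ext x
      simp only [mem_filter, mem_univ, true_and, mem_singleton, Fin.ext_iff]
      omega
    · exact card_singleton _

theorem ncard_edgeSet_lollipopGraph {N c e : ℕ} (hec : e + 1 ≤ c) (hcN : c ≤ N)
    (he : e = 0 ∨ c < N) :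
    (lollipopGraph N c e).edgeSet.ncard = c.choose 2 + (N - c) + e := by
  classical
  rw [lollipopGraph, ncard_edgeSet_fromRel_of_lt fun x y h => h.1, card_filter,
    Fintype.sum_prod_type_right]
  simp_rw [← card_filter, card_filter_lollipopGraph_lt hec]
  rw [Fin.sum_univ_eq_sum_range (fun b => if b < c then b else if b = c then e + 1 else 1)]
  obtain ⟨n, rfl⟩ : ∃ n, N = c + n := ⟨N - c, by omega⟩
  rw [sum_range_add, sum_congr rfl fun b hb => if_pos (mem_range.1 hb), sum_range_id,
    ← Nat.choose_two_right]
  rcases n with _ | n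
  · simp only [sum_range_zero]
    omega
  · rw [sum_range_succ']
    simp only [add_lt_iff_neg_left, not_lt_zero, ↓reduceIte, Nat.add_eq_left, Nat.add_eq_zero_iff,
      one_ne_zero, and_false, sum_const, card_range, smul_eq_mul, mul_one, add_zero,
      lt_self_iff_false, add_tsub_cancel_left]
    omega

theorem lollipopGraph_connected {N : ℕ} (c e : ℕ) (hN : 0 < N) :
    (lollipopGraph N c e).Connected := by
  obtain ⟨n, rfl⟩ : ∃ n, N = n + 1 := ⟨N - 1, by omega⟩
  refine (pathGraph_connected n).mono fun x y hxy => ?_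
  rw [pathGraph_adj] at hxy
  rw [lollipopGraph, fromRel_adj]
  omega

theorem le_dist_lollipopGraph {N c e : ℕ} (hN : 2 ≤ N) (hec : e + 2 ≤ c) (hcN : c ≤ N) :
    N + 1 - c ≤ (lollipopGraph N c e).dist ⟨0, by omega⟩ ⟨N - 1, by omega⟩ := by
  let φ : Fin N → ℕ := fun x => if x.val < c then min x.val 1 else x.val + 2 - c
  have hφ : ∀ x y, (lollipopGraph N c e).Adj x y → φ y ≤ φ x + 1 := fun x y hxy => by
    rw [lollipopGraph, fromRel_adj] at hxy
    simp only [φ]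
    split_ifs <;> omega
  have := ((lollipopGraph_connected c e (by omega)).preconnected ⟨0, by omega⟩
    ⟨N - 1, by omega⟩).le_add_dist_of_adj_le hφ
  simp only [φ] at this
  split_ifs at this <;> omega

theorem exists_lollipop_parameters {N m : ℕ} (hN : 2 ≤ N) (hm1 : N - 1 ≤ m)
    (hm2 : m ≤ N.choose 2) :
    ∃ c e, e + 2 ≤ c ∧ c ≤ N ∧ (e = 0 ∨ c < N) ∧ c.choose 2 + (N - c) + e = m ∧
      N + 1 - c = N - (1 + Nat.sqrt (9 + 8 * m - 8 * N)) / 2 := by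
  set t := m - (N - 1)
  rw [show 9 + 8 * m - 8 * N = 8 * t + 1 by omega]
  set Q := (1 + Nat.sqrt (8 * t + 1)) / 2
  obtain ⟨hQt, htQ⟩ : Q.choose 2 ≤ t ∧ t < (Q + 1).choose 2 :=
    Nat.choose_two_le_and_lt_succ_choose_two t
  have hpascal : (Q + 1).choose 2 = Q.choose 2 + Q := by
    rw [Nat.choose_succ_succ', Nat.choose_one_right, add_comm]
  have hQN : Q + 1 ≤ N := by
    by_contra h
    have := Nat.choose_le_choose 2 (show N ≤ Q by omega)
    omega
  refine ⟨Q + 1, t - Q.choose 2, by omega, hQN, ?_, by omega, by omega⟩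
  rcases (show Q + 1 < N ∨ Q + 1 = N by omega) with h | h
  · exact .inr h
  · have : N.choose 2 = Q.choose 2 + Q := h ▸ hpascal
    omega

/-- The maximum diameter of a connected simple graph on `N` vertices with `m` edges
(`N-1 ≤ m ≤ C(N,2)`) equals `N - ⌊(1 + √(9 + 8m - 8N))/2⌋`: this value is achieved and
is an upper bound. -/
theorem stmt_18 (N m : ℕ) (hN : 2 ≤ N) (hm1 : N - 1 ≤ m) (hm2 : m ≤ N.choose 2) :
    IsGreatest
      {k | ∃ G : SimpleGraph (Fin N), G.Connected ∧ G.edgeSet.ncard = m ∧ graphDiam G = k}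
      (N - (1 + Nat.sqrt (9 + 8 * m - 8 * N)) / 2) := by
  have hupper (G : SimpleGraph (Fin N)) :
      graphDiam G ≤ N - (1 + Nat.sqrt (9 + 8 * G.edgeSet.ncard - 8 * N)) / 2 := by
    simpa using graphDiam_le G
  obtain ⟨c, e, hec, hcN, he, hcount, hdiam⟩ := exists_lollipop_parameters hN hm1 hm2
  have hm : (lollipopGraph N c e).edgeSet.ncard = m :=
    (ncard_edgeSet_lollipopGraph (by omega) hcN he).trans hcount
  refine ⟨⟨_, lollipopGraph_connected c e (by omega), hm, le_antisymm (hm ▸ hupper _) ?_⟩,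
    fun k ⟨G, _, hG, hk⟩ => hk ▸ hG ▸ hupper G⟩
  exact hdiam ▸ (le_dist_lollipopGraph hN hec hcN).trans (dist_le_graphDiam _ _ _)
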